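/- arXiv:1506.02162 — 5 statements merged into one kernel-verified Lean document; each statement's English description precedes it below -/
import Mathlib

section
/- Let A ∈ ℝ^{m×d} and b ∈ ℝ^m define the bounded polytope P = {x ∈ ℝ^d : Ax ≤ b}, and assume that every set of d−1 rows of A is linearly independent. Let p ∈ ℝ^d, b' ∈ ℝ, c ∈ ℝ^d, and let N = {x : p·x ≤ b'}. Suppose x⁰ is the unique maximizer of c·x over P ∩ N, and suppose exactly d of the m+1 inequality constraints (the m rows A_j·x ≤ b_j together with p·x ≤ b') hold with equality at x⁰. Then x⁰ lies on an edge of P: there exists a set J of d−1 indices in {1,…,m} such that the rows {A_j : j ∈ J} are linearly independent and A_j·x⁰ = b_j for every j ∈ J. -/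
open Matrix

/-! Of the `d` constraints binding at `x0`, at most one is `p ⬝ᵥ x ≤ b'`, so at least `d - 1`
rows of `A` are tight at `x0`; any `d - 1` of them are linearly independent by assumption. -/

theorem Set.ncard_le_ncard_preimage_inl_add_card {α β : Type*} [Finite β] (s : Set (α ⊕ β)) :
    s.ncard ≤ (Sum.inl ⁻¹' s).ncard + Nat.card β := by
  calc s.ncard = (Sum.inl '' (Sum.inl ⁻¹' s) ∪ Sum.inr '' (Sum.inr ⁻¹' s)).ncard := by
        rw [Set.image_preimage_inl_union_image_preimage_inr]
    _ ≤ (Sum.inl '' (Sum.inl ⁻¹' s)).ncard + (Sum.inr '' (Sum.inr ⁻¹' s)).ncard :=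
        Set.ncard_union_le _ _
    _ ≤ (Sum.inl ⁻¹' s).ncard + Nat.card β := by
        rw [Set.ncard_image_of_injective _ Sum.inl_injective,
          Set.ncard_image_of_injective _ Sum.inr_injective]
        exact Nat.add_le_add_left (Set.ncard_le_card _) _

theorem stmt_2_general {d m : ℕ} (A : Matrix (Fin m) (Fin d) ℝ) (b : Fin m → ℝ)
    (hrows : ∀ J : Finset (Fin m), J.card = d - 1 →
      LinearIndependent ℝ (fun j : J => A (j : Fin m)))
    (p : Fin d → ℝ) (b' : ℝ) (x0 : Fin d → ℝ)
    (hbind : {i : Fin m ⊕ Unit |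
      Sum.elim (fun j => A j ⬝ᵥ x0 = b j) (fun _ => p ⬝ᵥ x0 = b') i}.ncard = d) :
    ∃ J : Finset (Fin m), J.card = d - 1 ∧
      LinearIndependent ℝ (fun j : J => A (j : Fin m)) ∧
      ∀ j ∈ J, A j ⬝ᵥ x0 = b j := by
  classical
  have hactive : d ≤ {j | A j ⬝ᵥ x0 = b j}.ncard + 1 := by
    calc d = _ := hbind.symm
      _ ≤ _ := Set.ncard_le_ncard_preimage_inl_add_card _
      _ = _ := by rw [Nat.card_unique]; rfl
  rw [Set.ncard_eq_toFinset_card'] at hactive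
  obtain ⟨J, hJ, hcard⟩ := Finset.exists_subset_card_eq (Nat.sub_le_of_le_add hactive)
  exact ⟨J, hcard, hrows J hcard, fun j hj => by simpa using hJ hj⟩

/-- Lemma 3.2: under the non-degeneracy assumptions, the unique optimal solution
of the day's LP (over `P ∩ N` where `P = {x | Ax ≤ b}` and `N = {x | p·x ≤ b'}`)
which binds exactly `d` of the `m + 1` constraints lies on an edge of `P`. -/
theorem stmt_2 {d m : ℕ} (A : Matrix (Fin m) (Fin d) ℝ) (b : Fin m → ℝ)
    (hBdd : Bornology.IsBounded {x : Fin d → ℝ | ∀ j, A j ⬝ᵥ x ≤ b j})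
    (hrows : ∀ J : Finset (Fin m), J.card = d - 1 →
      LinearIndependent ℝ (fun j : J => A (j : Fin m)))
    (p : Fin d → ℝ) (b' : ℝ) (c : Fin d → ℝ) (x0 : Fin d → ℝ)
    (hx0P : ∀ j, A j ⬝ᵥ x0 ≤ b j) (hx0N : p ⬝ᵥ x0 ≤ b')
    (hopt : ∀ y, (∀ j, A j ⬝ᵥ y ≤ b j) → p ⬝ᵥ y ≤ b' → c ⬝ᵥ y ≤ c ⬝ᵥ x0)
    (huniq : ∀ y, (∀ j, A j ⬝ᵥ y ≤ b j) → p ⬝ᵥ y ≤ b' → c ⬝ᵥ y = c ⬝ᵥ x0 → y = x0)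
    (hbind : {i : Fin m ⊕ Unit |
      Sum.elim (fun j => A j ⬝ᵥ x0 = b j) (fun _ => p ⬝ᵥ x0 = b') i}.ncard = d) :
    ∃ J : Finset (Fin m), J.card = d - 1 ∧
      LinearIndependent ℝ (fun j : J => A (j : Fin m)) ∧
      ∀ j ∈ J, A j ⬝ᵥ x0 = b j :=
  stmt_2_general A b hrows p b' x0 hbind
end

section
/- Let A ∈ ℝ^{m×d} and b ∈ ℝ^m define the polytope P = {x ∈ ℝ^d : Ax ≤ b}, and assume that every set of d−1 rows of A is linearly independent (with m ≥ d−1 ≥ 1). Let x, y, z ∈ P be three distinct collinear points such that each of x, y, z satisfies at least d−1 of the constraints A_j·x ≤ b_j with equality. Then there exists a set J of d−1 indices in {1,…,m} such that the rows {A_j : j ∈ J} are linearly independent and A_j·x = A_j·y = A_j·z = b_j for all j ∈ J; moreover, the affine line containing x, y, z equals the edge-space e_J = {w ∈ ℝ^d : A_j·w = b_j for all j ∈ J}. In particular, x, y, z all lie on the same edge of P. -/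
/-!
Of three distinct collinear points one lies strictly between the other two, and a constraint of
`P` that is tight at an interior point of a segment in `P` is tight along the whole segment. Hence
the `d - 1` constraints tight at the middle point are tight at all three points. Their rows being
linearly independent, the common solution set of these constraints is a line, which must be the
line through the three points.
-/

open Matrix Module

theorem Sbtw.apply_eq_left_of_le {R V P : Type*} [Field R] [LinearOrder R] [IsStrictOrderedRing R]
    [AddCommGroup V] [Module R V] [AddTorsor V P] {f : P →ᵃ[R] R} {x y z : P} {c : R}
    (h : Sbtw R x y z) (hx : f x ≤ c) (hz : f z ≤ c) (hy : f y = c) : f x = c := by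
  obtain ⟨t, ⟨ht₀, ht₁⟩, rfl⟩ := h.mem_image_Ioo
  rw [AffineMap.apply_lineMap, AffineMap.lineMap_apply_ring] at hy
  nlinarith

theorem Collinear.sbtw_or_sbtw_or_sbtw {R V P : Type*} [Field R] [LinearOrder R]
    [IsStrictOrderedRing R] [AddCommGroup V] [Module R V] [AddTorsor V P] {x y z : P}
    (h : Collinear R ({x, y, z} : Set P)) (hxy : x ≠ y) (hyz : y ≠ z) (hxz : x ≠ z) :
    Sbtw R x y z ∨ Sbtw R y z x ∨ Sbtw R z x y := by
  rcases h.wbtw_or_wbtw_or_wbtw with h | h | h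
  · exact Or.inl ⟨h, hxy.symm, hyz⟩
  · exact Or.inr (Or.inl ⟨h, hyz.symm, hxz.symm⟩)
  · exact Or.inr (Or.inr ⟨h, hxz, hxy⟩)

theorem Matrix.finrank_ker_mulVecLin_of_linearIndependent_row {K m n : Type*} [Field K]
    [Fintype m] [Fintype n] {M : Matrix m n K} (h : LinearIndependent K M.row) :
    finrank K (LinearMap.ker M.mulVecLin) = Fintype.card n - Fintype.card m := by
  have hrank : finrank K (LinearMap.range M.mulVecLin) = Fintype.card m := h.rank_matrix
  have := LinearMap.finrank_range_add_finrank_ker M.mulVecLin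
  rw [finrank_fintype_fun_eq_card] at this
  omega

theorem LinearMap.setOf_apply_eq_eq_affineSpan_pair {K V W : Type*} [Field K] [AddCommGroup V]
    [Module K V] [FiniteDimensional K V] [AddCommGroup W] [Module K W] (f : V →ₗ[K] W)
    (hf : finrank K (ker f) ≤ 1) {x y : V} (hxy : x ≠ y) (hfxy : f x = f y) :
    {w | f w = f x} = line[K, x, y] := by
  have hker : ker f = K ∙ (y - x) := by
    refine (Submodule.eq_of_le_of_finrank_le ?_ ?_).symm
    · rw [Submodule.span_le, Set.singleton_subset_iff, SetLike.mem_coe, mem_ker, map_sub, hfxy,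
        sub_self]
    · rwa [finrank_span_singleton (sub_ne_zero.mpr hxy.symm)]
  ext w
  have hw : w = (w - x) +ᵥ x := by rw [vadd_eq_add, sub_add_cancel]
  rw [Set.mem_ofPred_eq, SetLike.mem_coe, hw, vadd_left_mem_affineSpan_pair, vadd_eq_add, map_add,
    add_eq_right, ← mem_ker, hker, Submodule.mem_span_singleton, vsub_eq_sub]

section Polytope

variable {K ι n : Type*} [Field K] [LinearOrder K] [IsStrictOrderedRing K] [Fintype n]
  (A : Matrix ι n K) (b : ι → K)

theorem dotProduct_eq_of_sbtw {a p q r : n → K} {c : K} (h : Sbtw K p q r) (hp : a ⬝ᵥ p ≤ c)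
    (hr : a ⬝ᵥ r ≤ c) (hq : a ⬝ᵥ q = c) : a ⬝ᵥ p = c ∧ a ⬝ᵥ r = c :=
  let f := (dotProductBilin K K a).toAffineMap
  ⟨h.apply_eq_left_of_le (f := f) hp hr hq, h.symm.apply_eq_left_of_le (f := f) hr hp hq⟩

theorem exists_mem_forall_binding_of_collinear {x y z : n → K} (hxP : ∀ j, A j ⬝ᵥ x ≤ b j)
    (hyP : ∀ j, A j ⬝ᵥ y ≤ b j) (hzP : ∀ j, A j ⬝ᵥ z ≤ b j) (hxy : x ≠ y) (hyz : y ≠ z)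
    (hxz : x ≠ z) (hcol : Collinear K ({x, y, z} : Set (n → K))) :
    ∃ p ∈ ({x, y, z} : Set (n → K)), ∀ j, A j ⬝ᵥ p = b j →
      A j ⬝ᵥ x = b j ∧ A j ⬝ᵥ y = b j ∧ A j ⬝ᵥ z = b j := by
  rcases hcol.sbtw_or_sbtw_or_sbtw hxy hyz hxz with h | h | h
  · refine ⟨y, by simp, fun j hj => ?_⟩
    obtain ⟨hx, hz⟩ := dotProduct_eq_of_sbtw h (hxP j) (hzP j) hj
    exact ⟨hx, hj, hz⟩
  · refine ⟨z, by simp, fun j hj => ?_⟩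
    obtain ⟨hy, hx⟩ := dotProduct_eq_of_sbtw h (hyP j) (hxP j) hj
    exact ⟨hx, hy, hj⟩
  · refine ⟨x, by simp, fun j hj => ?_⟩
    obtain ⟨hz, hy⟩ := dotProduct_eq_of_sbtw h (hzP j) (hyP j) hj
    exact ⟨hj, hy, hz⟩

omit [LinearOrder K] [IsStrictOrderedRing K] in
theorem setOf_dotProduct_eq_eq_affineSpan_pair {J : Finset ι}
    (hJ : LinearIndependent K (fun j : J => A j)) (hcard : Fintype.card n ≤ J.card + 1)
    {x y : n → K} (hx : ∀ j ∈ J, A j ⬝ᵥ x = b j) (hy : ∀ j ∈ J, A j ⬝ᵥ y = b j) (hxy : x ≠ y) :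
    {w : n → K | ∀ j ∈ J, A j ⬝ᵥ w = b j} = line[K, x, y] := by
  let M : Matrix J n K := of fun j => A j
  have hfinrank : finrank K (LinearMap.ker M.mulVecLin) ≤ 1 := by
    rw [finrank_ker_mulVecLin_of_linearIndependent_row (M := M) hJ, Fintype.card_coe]
    omega
  have hMx : M.mulVecLin x = fun j : J => b j := funext fun j => hx j j.2
  rw [← M.mulVecLin.setOf_apply_eq_eq_affineSpan_pair hfinrank hxy
    (hMx.trans (funext fun j => (hy j j.2).symm)), hMx]
  ext w
  simp only [Set.mem_ofPred_eq, mulVecBilin_apply, funext_iff, mulVec, of_apply, Subtype.forall, M]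

end Polytope

theorem stmt_3_general {d m : ℕ}
    (A : Matrix (Fin m) (Fin d) ℝ) (b : Fin m → ℝ)
    (hrows : ∀ J : Finset (Fin m), J.card = d - 1 →
      LinearIndependent ℝ (fun j : J => A (j : Fin m)))
    (x y z : Fin d → ℝ)
    (hxP : ∀ j, A j ⬝ᵥ x ≤ b j) (hyP : ∀ j, A j ⬝ᵥ y ≤ b j)
    (hzP : ∀ j, A j ⬝ᵥ z ≤ b j)
    (hxy : x ≠ y) (hyz : y ≠ z) (hxz : x ≠ z)
    (hcol : Collinear ℝ ({x, y, z} : Set (Fin d → ℝ)))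
    (hxbind : d - 1 ≤ {j : Fin m | A j ⬝ᵥ x = b j}.ncard)
    (hybind : d - 1 ≤ {j : Fin m | A j ⬝ᵥ y = b j}.ncard)
    (hzbind : d - 1 ≤ {j : Fin m | A j ⬝ᵥ z = b j}.ncard) :
    ∃ J : Finset (Fin m), J.card = d - 1 ∧
      LinearIndependent ℝ (fun j : J => A (j : Fin m)) ∧
      (∀ j ∈ J, A j ⬝ᵥ x = b j ∧ A j ⬝ᵥ y = b j ∧ A j ⬝ᵥ z = b j) ∧
      {w : Fin d → ℝ | ∀ j ∈ J, A j ⬝ᵥ w = b j} =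
        (affineSpan ℝ ({x, y, z} : Set (Fin d → ℝ)) : Set (Fin d → ℝ)) := by
  obtain ⟨p, hp, hbinds⟩ := exists_mem_forall_binding_of_collinear A b hxP hyP hzP hxy hyz hxz hcol
  have hpbind : d - 1 ≤ {j | A j ⬝ᵥ p = b j}.ncard := by
    rcases hp with rfl | rfl | rfl <;> assumption
  obtain ⟨J, hJp, hJcard⟩ := Set.exists_subset_card_eq hpbind
  lift J to Finset (Fin m) using J.toFinite
  rw [Set.ncard_coe_finset] at hJcard
  have hJbind : ∀ j ∈ J, A j ⬝ᵥ x = b j ∧ A j ⬝ᵥ y = b j ∧ A j ⬝ᵥ z = b j :=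
    fun j hj => hbinds j (hJp hj)
  have hJrows := hrows J hJcard
  refine ⟨J, hJcard, hJrows, hJbind, ?_⟩
  rw [setOf_dotProduct_eq_eq_affineSpan_pair A b hJrows (by rw [Fintype.card_fin, hJcard]; omega)
    (fun j hj => (hJbind j hj).1) (fun j hj => (hJbind j hj).2.1) hxy,
    hcol.affineSpan_eq_of_ne (by simp) (by simp) hxy]

/-- Lemma 3.4: three distinct collinear points, each lying on an edge of the
polytope `P = {x | Ax ≤ b}` (i.e. each binding at least `d - 1` constraints),
all lie on the same edge of `P`, and the affine line through them is the
corresponding edge-space. -/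
theorem stmt_3 {d m : ℕ} (hd : 2 ≤ d) (hm : d - 1 ≤ m)
    (A : Matrix (Fin m) (Fin d) ℝ) (b : Fin m → ℝ)
    (hBdd : Bornology.IsBounded {w : Fin d → ℝ | ∀ j, A j ⬝ᵥ w ≤ b j})
    (hrows : ∀ J : Finset (Fin m), J.card = d - 1 →
      LinearIndependent ℝ (fun j : J => A (j : Fin m)))
    (x y z : Fin d → ℝ)
    (hxP : ∀ j, A j ⬝ᵥ x ≤ b j) (hyP : ∀ j, A j ⬝ᵥ y ≤ b j)
    (hzP : ∀ j, A j ⬝ᵥ z ≤ b j)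
    (hxy : x ≠ y) (hyz : y ≠ z) (hxz : x ≠ z)
    (hcol : Collinear ℝ ({x, y, z} : Set (Fin d → ℝ)))
    (hxbind : d - 1 ≤ {j : Fin m | A j ⬝ᵥ x = b j}.ncard)
    (hybind : d - 1 ≤ {j : Fin m | A j ⬝ᵥ y = b j}.ncard)
    (hzbind : d - 1 ≤ {j : Fin m | A j ⬝ᵥ z = b j}.ncard) :
    ∃ J : Finset (Fin m), J.card = d - 1 ∧
      LinearIndependent ℝ (fun j : J => A (j : Fin m)) ∧
      (∀ j ∈ J, A j ⬝ᵥ x = b j ∧ A j ⬝ᵥ y = b j ∧ A j ⬝ᵥ z = b j) ∧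
      {w : Fin d → ℝ | ∀ j ∈ J, A j ⬝ᵥ w = b j} =
        (affineSpan ℝ ({x, y, z} : Set (Fin d → ℝ)) : Set (Fin d → ℝ)) :=
  stmt_3_general A b hrows x y z hxP hyP hzP hxy hyz hxz hcol hxbind hybind hzbind
end

section
/- Let A ∈ ℝ^{m×d} and b ∈ ℝ^m define the polytope P = {x ∈ ℝ^d : Ax ≤ b}, let p ∈ ℝ^d, b' ∈ ℝ, c ∈ ℝ^d, and N = {x : p·x ≤ b'}. Let J be a set of d−1 indices in {1,…,m} with rows {A_j : j ∈ J} linearly independent, and let e_J = {x ∈ ℝ^d : A_j·x = b_j for all j ∈ J} be the corresponding edge-space. Suppose e_J is contained in the hyperplane {x : p·x = b'}. Suppose x⁰ is the unique maximizer of c·x over P ∩ N and that exactly d of the m+1 inequality constraints (the m rows A_j·x ≤ b_j together with p·x ≤ b') hold with equality at x⁰. Then x⁰ ∉ e_J. -/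
open Matrix

/-- Lemma 3.5: if an edge-space `e_J` of the polytope `P = {x | Ax ≤ b}` is
entirely contained in the bounding hyperplane `{x | p·x = b'}` of the day's
additional constraint, then the day's unique optimum (which binds exactly `d`
of the `m + 1` constraints) does not lie on `e_J`. -/
theorem stmt_5 {d m : ℕ} (A : Matrix (Fin m) (Fin d) ℝ) (b : Fin m → ℝ)
    (hBdd : Bornology.IsBounded {x : Fin d → ℝ | ∀ j, A j ⬝ᵥ x ≤ b j})
    (p : Fin d → ℝ) (b' : ℝ) (c : Fin d → ℝ)
    (J : Finset (Fin m)) (hJcard : J.card = d - 1)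
    (hJli : LinearIndependent ℝ (fun j : J => A (j : Fin m)))
    (hJsub : {x : Fin d → ℝ | ∀ j ∈ J, A j ⬝ᵥ x = b j} ⊆ {x | p ⬝ᵥ x = b'})
    (x0 : Fin d → ℝ)
    (hx0P : ∀ j, A j ⬝ᵥ x0 ≤ b j) (hx0N : p ⬝ᵥ x0 ≤ b')
    (hopt : ∀ y, (∀ j, A j ⬝ᵥ y ≤ b j) → p ⬝ᵥ y ≤ b' → c ⬝ᵥ y ≤ c ⬝ᵥ x0)
    (huniq : ∀ y, (∀ j, A j ⬝ᵥ y ≤ b j) → p ⬝ᵥ y ≤ b' → c ⬝ᵥ y = c ⬝ᵥ x0 → y = x0)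
    (hbind : {i : Fin m ⊕ Unit |
      Sum.elim (fun j => A j ⬝ᵥ x0 = b j) (fun _ => p ⬝ᵥ x0 = b') i}.ncard = d) :
    x0 ∉ {x : Fin d → ℝ | ∀ j ∈ J, A j ⬝ᵥ x = b j} := by
  intro hmem
  have hp : p ⬝ᵥ x0 = b' := hJsub hmem
  set S : Set (Fin m ⊕ Unit) := {i : Fin m ⊕ Unit |
      Sum.elim (fun j => A j ⬝ᵥ x0 = b j) (fun _ => p ⬝ᵥ x0 = b') i} with hS
  -- d ≥ 1
  have hd : 1 ≤ d := by
    rcases Nat.eq_zero_or_pos d with h0 | h1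
    · exfalso
      have hmemS : (Sum.inr () : Fin m ⊕ Unit) ∈ S := hp
      have : S.ncard ≠ 0 := by
        intro h
        rw [Set.ncard_eq_zero (Set.toFinite S)] at h
        simp [h] at hmemS
      omega
    · exact h1
  -- the binding set is exactly J (as inl) together with inr
  have hT0sub : (Sum.inl '' (J : Set (Fin m)) ∪ {Sum.inr ()} : Set (Fin m ⊕ Unit)) ⊆ S := by
    rintro i (⟨j, hj, rfl⟩ | hi)
    · exact hmem j hj
    · rcases hi; exact hp
  have hT0card : (Sum.inl '' (J : Set (Fin m)) ∪ {Sum.inr ()} : Set (Fin m ⊕ Unit)).ncard = d := by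
    rw [Set.ncard_union_eq (by simp) (by exact (Set.toFinite _)) (Set.toFinite _)]
    rw [Set.ncard_image_of_injective _ Sum.inl_injective, Set.ncard_coe_finset,
      Set.ncard_singleton, hJcard]
    omega
  have hT0eq : (Sum.inl '' (J : Set (Fin m)) ∪ {Sum.inr ()} : Set (Fin m ⊕ Unit)) = S :=
    Set.eq_of_subset_of_ncard_le hT0sub (by rw [hbind, hT0card]) (Set.toFinite S)
  have hstrict : ∀ j ∉ J, A j ⬝ᵥ x0 < b j := by
    intro j hj
    refine lt_of_le_of_ne (hx0P j) ?_
    intro heq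
    have : (Sum.inl j : Fin m ⊕ Unit) ∈ S := heq
    rw [← hT0eq] at this
    rcases this with ⟨j', hj', hj'eq⟩ | h
    · rw [Sum.inl.injEq] at hj'eq; exact hj (hj'eq ▸ hj')
    · simp at h
  -- find a nonzero direction v in the kernel of the rows in J
  set T : (Fin d → ℝ) →ₗ[ℝ] (J → ℝ) :=
    { toFun := fun x j => A j ⬝ᵥ x
      map_add' := by intros x y; funext j; simp [dotProduct_add]
      map_smul' := by intros a x; funext j; simp [dotProduct_smul] } with hT
  have hTni : ¬ Function.Injective T := by
    intro hinj
    have := LinearMap.finrank_le_finrank_of_injective hinj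
    rw [Module.finrank_pi, Module.finrank_pi] at this
    simp only [Fintype.card_fin, Fintype.card_coe, hJcard] at this
    omega
  rw [Function.not_injective_iff] at hTni
  obtain ⟨x, y, hxy, hne⟩ := hTni
  set v := x - y with hv
  have hv0 : v ≠ 0 := sub_ne_zero.mpr hne
  have hker : ∀ j ∈ J, A j ⬝ᵥ v = 0 := by
    intro j hj
    have : T v = 0 := by rw [hv, map_sub, hxy, sub_self]
    have := congrFun this ⟨j, hj⟩
    simpa [hT] using this
  -- feasibility of x0 + t • v for small t
  have hfeasJ : ∀ t : ℝ, ∀ j ∈ J, A j ⬝ᵥ (x0 + t • v) = b j := by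
    intro t j hj
    rw [dotProduct_add, dotProduct_smul, hker j hj, hmem j hj]
    simp
  have hpfeas : ∀ t : ℝ, p ⬝ᵥ (x0 + t • v) = b' := fun t => hJsub (fun j hj => hfeasJ t j hj)
  have hEv : ∀ᶠ t : ℝ in nhds 0, ∀ j, A j ⬝ᵥ (x0 + t • v) ≤ b j := by
    rw [Filter.eventually_all]
    intro j
    by_cases hj : j ∈ J
    · filter_upwards with t
      exact (hfeasJ t j hj).le
    · have hcont : Continuous fun t : ℝ => A j ⬝ᵥ (x0 + t • v) := by
        simp only [dotProduct_add, dotProduct_smul, smul_eq_mul]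
        exact continuous_const.add (continuous_id.mul continuous_const)
      have htend : Filter.Tendsto (fun t : ℝ => A j ⬝ᵥ (x0 + t • v)) (nhds 0)
          (nhds (A j ⬝ᵥ x0)) := by
        have := hcont.tendsto 0
        simpa using this
      filter_upwards [htend.eventually_lt_const (hstrict j hj)] with t ht
      exact ht.le
  obtain ⟨ε, hε, hball⟩ := Metric.eventually_nhds_iff.mp hEv
  have hfeas : ∀ t : ℝ, |t| < ε → ∀ j, A j ⬝ᵥ (x0 + t • v) ≤ b j := by
    intro t ht
    exact hball (by simpa [Real.dist_eq] using ht)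
  have hcv : ∀ t : ℝ, |t| < ε → t * (c ⬝ᵥ v) ≤ 0 := by
    intro t ht
    have := hopt (x0 + t • v) (hfeas t ht) (hpfeas t).le
    rw [dotProduct_add, dotProduct_smul, smul_eq_mul] at this
    linarith
  have hε2 : |ε / 2| < ε := by rw [abs_of_pos (by linarith)]; linarith
  have hε2' : |(-(ε / 2))| < ε := by rw [abs_neg]; exact hε2
  have hcv0 : c ⬝ᵥ v = 0 := by
    have h1 := hcv (ε / 2) hε2
    have h2 := hcv (-(ε / 2)) hε2'
    nlinarith
  have := huniq (x0 + (ε / 2) • v) (hfeas _ hε2) (hpfeas _).le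
    (by rw [dotProduct_add, dotProduct_smul, hcv0]; simp)
  have hv0' : (ε / 2) • v = 0 := by
    have := congrArg (fun z => z - x0) this
    simpa [add_sub_cancel_left] using this
  rcases smul_eq_zero.mp hv0' with h | h
  · linarith
  · exact hv0 h
end

section
/- Let k ≥ 1 and let S_1, …, S_k ⊆ ℝ^d be segments (each S_i is the convex hull of two points). Let D be a Borel probability distribution on ℝ^d supported on S_1 ∪ ⋯ ∪ S_k, and let X_1, …, X_T be independent draws from D. Then the expected number of indices t ∈ {1, …, T} for which X_t does not lie in the convex hull of {X_1, …, X_{t−1}} is at most 2k(1 + ln T). -/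
/-!
If `x` lies on a segment `S` and outside the convex hull of some earlier points, then among the
earlier points lying on `S`, `x` is strictly extreme for the linear order obtained by projecting
onto the direction of `S`: otherwise it would sit between two of them. So a mistake on day `t`
forces `X_t` to be the strict maximum or the strict minimum of the first `t + 1` draws that land
on some segment `S_i`. The draws are exchangeable, hence each of these `2k` events has
probability at most `1 / (t + 1)`, and summing over `t` gives `2k H_T ≤ 2k (1 + log T)`.
-/

open MeasureTheory Finset
open scoped ENNReal

section StrictMax

variable {ι α : Type*}

def strictMaxEvent (S : Set α) (f : α → ℝ) (I : Finset ι) (j : ι) : Set (ι → α) :=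
  {X | X j ∈ S ∧ ∀ s ∈ I, s ≠ j → X s ∈ S → f (X s) < f (X j)}

theorem measurableSet_strictMaxEvent [Countable ι] [MeasurableSpace α] {S : Set α} {f : α → ℝ}
    (hS : MeasurableSet S) (hf : Measurable f) (I : Finset ι) (j : ι) :
    MeasurableSet (strictMaxEvent S f I j) := by
  have hmem : ∀ s, Measurable fun X : ι → α => X s ∈ S := fun s =>
    measurableSet_setOfPred.1 (hS.preimage (measurable_pi_apply s))
  refine measurableSet_setOfPred.2 <| (hmem j).and <| Measurable.forall fun s =>
    Measurable.imp measurable_const <| Measurable.imp measurable_const <| (hmem s).imp ?_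
  exact measurableSet_setOfPred.1 <|
    measurableSet_lt (hf.comp (measurable_pi_apply s)) (hf.comp (measurable_pi_apply j))

theorem pairwiseDisjoint_strictMaxEvent (S : Set α) (f : α → ℝ) (I : Finset ι) :
    (I : Set ι).PairwiseDisjoint (strictMaxEvent S f I) := by
  intro i hi j hj hij
  refine Set.disjoint_left.2 fun X hXi hXj => ?_
  exact lt_asymm (hXi.2 j hj hij.symm hXj.1) (hXj.2 i hi hij hXi.1)

theorem preimage_comp_swap_strictMaxEvent [DecidableEq ι] (S : Set α) (f : α → ℝ)
    {I : Finset ι} {i j : ι} (hi : i ∈ I) (hj : j ∈ I) :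
    (fun X : ι → α => X ∘ Equiv.swap i j) ⁻¹' strictMaxEvent S f I j =
      strictMaxEvent S f I i := by
  ext X
  simp only [Set.mem_preimage, strictMaxEvent, Set.mem_ofPred_eq, Function.comp_apply,
    Equiv.swap_apply_right]
  refine and_congr_right fun _ => ?_
  rw [← (Equiv.swap i j).forall_congr_right]
  refine forall_congr' fun s => ?_
  have hmem : Equiv.swap i j s ∈ I ↔ s ∈ I := by
    rw [Equiv.swap_apply_def]; split_ifs <;> simp_all
  rw [hmem, Ne, Equiv.swap_apply_eq_iff, Equiv.swap_apply_right, Equiv.swap_apply_self]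

theorem measure_strictMaxEvent_le [Countable ι] [DecidableEq ι] [MeasurableSpace α]
    {μ : Measure (ι → α)} [IsProbabilityMeasure μ]
    (hμ : ∀ i j, MeasurePreserving (fun X : ι → α => X ∘ Equiv.swap i j) μ μ)
    {S : Set α} {f : α → ℝ} (hS : MeasurableSet S) (hf : Measurable f) {I : Finset ι} {j : ι}
    (hj : j ∈ I) : μ (strictMaxEvent S f I j) ≤ (#I : ℝ≥0∞)⁻¹ := by
  have hsame : ∀ i ∈ I, μ (strictMaxEvent S f I i) = μ (strictMaxEvent S f I j) := fun i hi => by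
    rw [← preimage_comp_swap_strictMaxEvent S f hi hj,
      (hμ i j).measure_preimage (measurableSet_strictMaxEvent hS hf I j).nullMeasurableSet]
  rw [ENNReal.le_inv_iff_mul_le, mul_comm, ← nsmul_eq_mul, ← sum_const, ← sum_congr rfl hsame,
    ← measure_biUnion_finset (pairwiseDisjoint_strictMaxEvent S f I)
      fun i _ => measurableSet_strictMaxEvent hS hf I i]
  exact prob_le_one

theorem measurePreserving_comp_perm [Fintype ι] [MeasurableSpace α] (D : Measure α)
    [SigmaFinite D] (σ : Equiv.Perm ι) :
    MeasurePreserving (fun X : ι → α => X ∘ σ) (Measure.pi fun _ => D) (Measure.pi fun _ => D) :=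
  measurePreserving_arrowCongr' (fun _ => D) (fun _ => D) σ.symm (MeasurableEquiv.refl α)
    fun _ => MeasurePreserving.id D

theorem measureReal_strictMaxEvent_Iic_le {T : ℕ} [MeasurableSpace α] (D : Measure α)
    [IsProbabilityMeasure D] {S : Set α} {f : α → ℝ} (hS : MeasurableSet S) (hf : Measurable f)
    (t : Fin T) :
    (Measure.pi fun _ : Fin T => D).real (strictMaxEvent S f (Iic t) t) ≤ ((t : ℝ) + 1)⁻¹ := by
  have h := measure_strictMaxEvent_le (fun i j => measurePreserving_comp_perm D (Equiv.swap i j))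
    hS hf (mem_Iic.2 (le_refl t))
  rw [Fin.card_Iic] at h
  calc _ ≤ (((t + 1 : ℕ) : ℝ≥0∞)⁻¹).toReal := ENNReal.toReal_mono (by simp) h
    _ = ((t : ℝ) + 1)⁻¹ := by
      rw [ENNReal.toReal_inv, ENNReal.toReal_natCast, Nat.cast_add, Nat.cast_one]

end StrictMax

section Geometry

variable {E : Type*} [AddCommGroup E] [Module ℝ E]

theorem Convex.mem_segment_of_injOn {S : Set E} (hS : Convex ℝ S) {ℓ : E →ₗ[ℝ] ℝ}
    (hℓ : Set.InjOn ℓ S) {p q x : E} (hp : p ∈ S) (hq : q ∈ S) (hx : x ∈ S)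
    (hpx : ℓ p ≤ ℓ x) (hxq : ℓ x ≤ ℓ q) : x ∈ segment ℝ p q := by
  obtain ⟨y, hy, hyx⟩ : ℓ x ∈ ℓ.toAffineMap '' segment ℝ p q := by
    rw [image_segment, LinearMap.coe_toAffineMap, segment_eq_Icc (hpx.trans hxq)]
    exact ⟨hpx, hxq⟩
  rwa [← hℓ (hS.segment_subset hp hq hy) hx hyx]

theorem Convex.forall_lt_or_forall_gt_of_notMem_convexHull {S P : Set E} (hS : Convex ℝ S)
    {ℓ : E →ₗ[ℝ] ℝ} (hℓ : Set.InjOn ℓ S) {x : E} (hx : x ∈ S) (hxP : x ∉ convexHull ℝ P) :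
    (∀ p ∈ P ∩ S, ℓ p < ℓ x) ∨ ∀ p ∈ P ∩ S, ℓ x < ℓ p := by
  by_contra! h
  obtain ⟨⟨q, ⟨hqP, hqS⟩, hxq⟩, ⟨p, ⟨hpP, hpS⟩, hpx⟩⟩ := h
  exact hxP <| segment_subset_convexHull hpP hqP (hS.mem_segment_of_injOn hℓ hpS hqS hx hpx hxq)

theorem mem_strictMaxEvent_or_of_notMem_convexHull {ι : Type*} [PartialOrder ι]
    [LocallyFiniteOrderBot ι] {S : Set E} (hS : Convex ℝ S) {ℓ : E →ₗ[ℝ] ℝ} (hℓ : Set.InjOn ℓ S)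
    {X : ι → E} {t : ι} (hXt : X t ∈ S) (hX : X t ∉ convexHull ℝ (X '' {s | s < t})) :
    X ∈ strictMaxEvent S ℓ (Iic t) t ∨ X ∈ strictMaxEvent S ⇑(-ℓ) (Iic t) t := by
  have hprev : ∀ s ∈ Iic t, s ≠ t → X s ∈ S → X s ∈ X '' {s | s < t} ∩ S := fun s hs hst hsS =>
    ⟨Set.mem_image_of_mem X (lt_of_le_of_ne (mem_Iic.1 hs) hst), hsS⟩
  rcases hS.forall_lt_or_forall_gt_of_notMem_convexHull hℓ hXt hX with h | h
  · exact .inl ⟨hXt, fun s hs hst hsS => h _ (hprev s hs hst hsS)⟩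
  · exact .inr ⟨hXt, fun s hs hst hsS => neg_lt_neg (h _ (hprev s hs hst hsS))⟩

theorem injOn_dotProductBilin_sub_segment {n : Type*} [Fintype n] (u v : n → ℝ) :
    Set.InjOn (dotProductBilin ℝ ℝ (v - u)) (segment ℝ u v) := by
  rw [segment_eq_image']
  rintro _ ⟨a, -, rfl⟩ _ ⟨b, -, rfl⟩ h
  simp only [dotProductBilin_apply_apply, dotProduct_add, dotProduct_smul, smul_eq_mul,
    add_right_inj] at h
  by_cases huv : v - u = 0
  · simp [huv]
  · rw [mul_right_cancel₀ (mt dotProduct_self_eq_zero.1 huv) h]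

theorem measurableSet_segment {F : Type*} [AddCommGroup F] [Module ℝ F] [TopologicalSpace F]
    [IsTopologicalAddGroup F] [ContinuousSMul ℝ F] [T2Space F] [MeasurableSpace F]
    [OpensMeasurableSpace F] (u v : F) : MeasurableSet (segment ℝ u v) := by
  rw [← convexHull_pair]
  exact ((Set.toFinite {u, v}).isCompact_convexHull (𝕜 := ℝ)).isClosed.measurableSet

end Geometry

theorem integral_card_filter_le_sum_measureReal {Ω τ κ : Type*} [MeasurableSpace Ω]
    {μ : Measure Ω} [IsFiniteMeasure μ] [Fintype τ] [Fintype κ] {P : τ → Ω → Prop}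
    [∀ t ω, Decidable (P t ω)] {A : τ → κ → Set Ω} (hA : ∀ t j, MeasurableSet (A t j))
    (hP : ∀ᵐ ω ∂μ, ∀ t, P t ω → ∃ j, ω ∈ A t j) :
    ∫ ω, (#{t | P t ω} : ℝ) ∂μ ≤ ∑ t, ∑ j, μ.real (A t j) := by
  have hint : ∀ t j, Integrable ((A t j).indicator (1 : Ω → ℝ)) μ := fun t j =>
    (integrable_indicator_iff (hA t j)).2 (integrableOn_const (measure_ne_top μ _))
  have hcount : ∀ᵐ ω ∂μ, (#{t | P t ω} : ℝ) ≤ ∑ t, ∑ j, (A t j).indicator 1 ω := by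
    filter_upwards [hP] with ω hω
    rw [card_filter, Nat.cast_sum]
    refine sum_le_sum fun t _ => ?_
    split_ifs with ht
    · obtain ⟨j, hj⟩ := hω t ht
      calc ((1 : ℕ) : ℝ) = (A t j).indicator 1 ω := by simp [hj]
        _ ≤ ∑ j, (A t j).indicator 1 ω :=
          single_le_sum (fun j _ => Set.indicator_nonneg (fun _ _ => zero_le_one) ω) (mem_univ j)
    · exact_mod_cast sum_nonneg fun j _ => Set.indicator_nonneg (fun _ _ => zero_le_one) ω
  calc ∫ ω, (#{t | P t ω} : ℝ) ∂μ ≤ ∫ ω, ∑ t, ∑ j, (A t j).indicator 1 ω ∂μ :=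
        integral_mono_of_nonneg (.of_forall fun _ => Nat.cast_nonneg _)
          (integrable_finsetSum _ fun t _ => integrable_finsetSum _ fun j _ => hint t j) hcount
    _ = ∑ t, ∑ j, μ.real (A t j) := by
        rw [integral_finsetSum _ fun t _ => integrable_finsetSum _ fun j _ => hint t j]
        refine sum_congr rfl fun t _ => ?_
        rw [integral_finsetSum _ fun j _ => hint t j]
        exact sum_congr rfl fun j _ => integral_indicator_one (hA t j)

theorem sum_fin_inv_succ_eq_harmonic (T : ℕ) : ∑ t : Fin T, ((t : ℝ) + 1)⁻¹ = harmonic T := by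
  rw [Fin.sum_univ_eq_sum_range (fun t => ((t : ℝ) + 1)⁻¹) T]
  push_cast [harmonic]
  rfl

open Classical in
theorem stmt_7_general {d k T : ℕ}
    (u v : Fin k → (Fin d → ℝ))
    (D : Measure (Fin d → ℝ)) [IsProbabilityMeasure D]
    (hsupp : D (⋃ i, segment ℝ (u i) (v i)) = 1) :
    ∫ X : Fin T → (Fin d → ℝ),
        ((Finset.univ.filter fun t : Fin T =>
          X t ∉ convexHull ℝ (X '' {s : Fin T | s < t})).card : ℝ)
      ∂(Measure.pi fun _ : Fin T => D) ≤ 2 * k * (1 + Real.log T) := by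
  -- `ℓ (i, true)` and `ℓ (i, false)` detect new strict maxima and minima along the `i`-th segment.
  let ℓ : Fin k × Bool → (Fin d → ℝ) →ₗ[ℝ] ℝ := fun ib =>
    if ib.2 then dotProductBilin ℝ ℝ (v ib.1 - u ib.1) else -dotProductBilin ℝ ℝ (v ib.1 - u ib.1)
  have hS : ∀ i, MeasurableSet (segment ℝ (u i) (v i)) := fun i => measurableSet_segment _ _
  have hℓ : ∀ ib, Measurable (ℓ ib) := fun ib => (ℓ ib).continuous_of_finiteDimensional.measurable
  have hdraws : ∀ᵐ X ∂(Measure.pi fun _ : Fin T => D), ∀ t, X t ∈ ⋃ i, segment ℝ (u i) (v i) :=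
    ae_all_iff.2 fun t => (measurePreserving_eval _ t).quasiMeasurePreserving.ae
      ((mem_ae_iff_prob_eq_one (MeasurableSet.iUnion hS)).2 hsupp)
  calc _ ≤ ∑ t : Fin T, ∑ ib : Fin k × Bool,
        (Measure.pi fun _ => D).real
          (strictMaxEvent (segment ℝ (u ib.1) (v ib.1)) (ℓ ib) (Iic t) t) := by
        refine integral_card_filter_le_sum_measureReal
          (fun t ib => measurableSet_strictMaxEvent (hS _) (hℓ _) _ _) ?_
        filter_upwards [hdraws] with X hX t ht
        obtain ⟨i, hi⟩ := Set.mem_iUnion.1 (hX t)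
        rcases mem_strictMaxEvent_or_of_notMem_convexHull (convex_segment _ _)
          (injOn_dotProductBilin_sub_segment _ _) hi ht with h | h
        exacts [⟨(i, true), h⟩, ⟨(i, false), h⟩]
    _ ≤ ∑ t : Fin T, ∑ ib : Fin k × Bool, ((t : ℝ) + 1)⁻¹ := by
        gcongr with t _ ib _
        exact measureReal_strictMaxEvent_Iic_le D (hS _) (hℓ _) t
    _ = 2 * k * harmonic T := by
        simp only [sum_const, card_univ, Fintype.card_prod, Fintype.card_fin, Fintype.card_bool,
          nsmul_eq_mul, ← mul_sum, sum_fin_inv_succ_eq_harmonic]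
        push_cast
        ring
    _ ≤ 2 * k * (1 + Real.log T) := by
        gcongr
        exact harmonic_le_one_add_log T

open Classical in
/-- Theorem 3.10 (LearnHull): if `D` is a probability distribution supported on
a union of `k` segments in `ℝ^d` and `X_1, …, X_T` are i.i.d. draws from `D`,
then the expected number of days `t` on which `X_t` falls outside the convex
hull of the previous draws is at most `2k(1 + ln T)`. -/
theorem stmt_7 {d k T : ℕ} (hk : 1 ≤ k)
    (u v : Fin k → (Fin d → ℝ))
    (D : Measure (Fin d → ℝ)) [IsProbabilityMeasure D]
    (hsupp : D (⋃ i, segment ℝ (u i) (v i)) = 1) :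
    ∫ X : Fin T → (Fin d → ℝ),
        ((Finset.univ.filter fun t : Fin T =>
          X t ∉ convexHull ℝ (X '' {s : Fin T | s < t})).card : ℝ)
      ∂(Measure.pi fun _ : Fin T => D) ≤ 2 * k * (1 + Real.log T) :=
  stmt_7_general u v D hsupp
end

section
/- Fix d ≥ 3 and N ≥ 1, and let the learner be any deterministic function L that maps a history (a finite list of pairs, each consisting of an additional constraint (p, q) ∈ ℝ^d × ℝ and the revealed optimal solution x ∈ ℝ^d of that day) together with the current day's constraint (p', q') ∈ ℝ^d × ℝ to a prediction in ℝ^d. Then there is an absolute constant γ > 0 such that there exist m ≥ 1, a matrix A ∈ ℝ^{m×d} and vector b ∈ ℝ^m defining a bounded polytope P = {x : Ax ≤ b} contained in the unit ℓ∞-ball whose vertices all have coordinates that are integer multiples of 2^{−N}, a known objective c ∈ ℝ^d, and a finite sequence of constraints (p^1, q^1), …, (p^T, q^T) such that: for each t ≤ T the maximizer x^t of c·x over P ∩ {x : p^t·x ≤ q^t} is unique, and the number of days t ≤ T on which L applied to the history ((p^1,q^1),x^1), …, ((p^{t−1},q^{t−1}),x^{t−1}) and the current constraint (p^t,q^t)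 fails to output x^t is at least γ·N. -/
/-!
The adversary hides a concave lattice chain in the plane of the first two coordinates, with
vertices `(k h, G k h)`, `k ≤ T`, where `h = 2⁻ᴺ` and each slope `G (k + 1) - G k` is either
`2 ^ (T - k - 1)` or `2 ^ (T - k)`; whatever the choices, the slopes are antitone, so the region
below the chain is a polytope. On day `t` the constraint `y 0 ≤ (t + 1) h` makes vertex `t + 1`
the unique maximiser of `y 1`, while the learner has only seen the vertices up to `t`: choosing
the slope `G (t + 1) - G t` after the prediction makes it wrong on each of the `T = ⌈N / 2⌉`
days. Since `G T ≤ T 2ᵀ ≤ 2ᴺ`, the polytope lies in the unit cube, and it is the convex hull of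
the vertices and of their feet on the axis `y 1 = 0`, all of which lie on the grid `h ℤ`.
-/

open Matrix Finset

lemma exists_matrix_eq_setOf_dotProduct_le {ι m : Type*} [Fintype ι] [Fintype m]
    (a : ι → m → ℝ) (c : ι → ℝ) :
    ∃ (A : Matrix (Fin (Fintype.card ι)) m ℝ) (b : Fin (Fintype.card ι) → ℝ),
      {y | ∀ j, A j ⬝ᵥ y ≤ b j} = {y | ∀ i, a i ⬝ᵥ y ≤ c i} := by
  let e := Fintype.equivFin ι
  exact ⟨fun j => a (e.symm j), fun j => c (e.symm j),
    Set.ext fun y => (e.forall_congr_left (p := fun i => a i ⬝ᵥ y ≤ c i)).symm⟩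

section Causal

variable {α : Type*}

def causalPrefix [Inhabited α] (F : ℕ → (ℕ → α) → α) : ℕ → ℕ → α
  | 0 => default
  | n + 1 => Function.update (causalPrefix F n) n (F n (causalPrefix F n))

lemma causalPrefix_of_lt [Inhabited α] (F : ℕ → (ℕ → α) → α) {m k : ℕ} (hk : k < m) :
    causalPrefix F m k = causalPrefix F (k + 1) k := by
  induction m with
  | zero => omega
  | succ m ih =>
    rcases Nat.lt_succ_iff_lt_or_eq.1 hk with hk | rfl
    · rw [causalPrefix, Function.update_of_ne hk.ne, ih hk]
    · rfl

theorem exists_forall_eq_of_causal [Inhabited α] (F : ℕ → (ℕ → α) → α)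
    (hF : ∀ β β' t, (∀ k < t, β k = β' k) → F t β = F t β') :
    ∃ β : ℕ → α, ∀ t, β t = F t β :=
  ⟨fun k => causalPrefix F (k + 1) k, fun t => by
    show causalPrefix F (t + 1) t = _
    rw [causalPrefix, Function.update_self]
    exact hF _ _ t fun k hk => causalPrefix_of_lt F hk⟩

theorem exists_forall_ne_of_causal (out pred : (ℕ → Bool) → ℕ → α)
    (hout : ∀ β β' t, (∀ k < t, β k = β' k) → (out β t = out β' t ↔ β t = β' t))
    (hpred : ∀ β β' t, (∀ k < t, β k = β' k) → pred β t = pred β' t) :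
    ∃ β : ℕ → Bool, ∀ t, pred β t ≠ out β t := by
  classical
  obtain ⟨β, hβ⟩ := exists_forall_eq_of_causal
    (fun t β => decide (pred β t = out (Function.update β t false) t)) fun β β' t h => by
      have hupd : ∀ k < t, Function.update β t false k = Function.update β' t false k :=
        fun k hk => by simp [Function.update_of_ne hk.ne, h k hk]
      simp only [hpred β β' t h, (hout _ _ t hupd).2 (by simp)]
  refine ⟨β, fun t hcorrect => ?_⟩
  have hflip := hout β (Function.update β t false) t fun k hk =>
    (Function.update_of_ne hk.ne _ _).symm
  rw [Function.update_self] at hflip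
  have hbit := hβ t
  cases h : β t
  · rw [h, eq_comm, decide_eq_false_iff_not] at hbit
    exact hbit (hcorrect.trans (hflip.2 h))
  · rw [h, eq_comm, decide_eq_true_iff] at hbit
    simpa [h] using hflip.1 (hcorrect.symm.trans hbit)

end Causal

section Chain

variable {n : ℕ}

def pt (u w : ℝ) : Fin (n + 2) → ℝ := fun i => if i = 0 then u else if i = 1 then w else 0

@[simp] lemma pt_zero (u w : ℝ) : pt (n := n) u w 0 = u := rfl

@[simp] lemma pt_one (u w : ℝ) : pt (n := n) u w 1 = w := by simp [pt]

lemma pt_inj {u w u' w' : ℝ} : pt (n := n) u w = pt u' w' ↔ u = u' ∧ w = w' :=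
  ⟨fun h => ⟨by simpa using congrFun h 0, by simpa using congrFun h 1⟩,
    fun ⟨hu, hw⟩ => hu ▸ hw ▸ rfl⟩

lemma smul_pt_add_smul_pt (a b u w u' w' : ℝ) :
    a • pt (n := n) u w + b • pt u' w' = pt (a * u + b * u') (a * w + b * w') := by
  ext i
  simp only [pt, Pi.add_apply, Pi.smul_apply, smul_eq_mul]
  split_ifs <;> ring

lemma eq_pt_of_nonneg_of_le {y : Fin (n + 2) → ℝ} {u w : ℝ} (h0 : 0 ≤ y) (h1 : y ≤ pt u w) :
    y = pt (y 0) (y 1) := by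
  ext i
  by_cases hi0 : i = 0
  · subst hi0; simp
  by_cases hi1 : i = 1
  · subst hi1; simp
  have h1i := h1 i
  simp only [pt, hi0, hi1, if_false] at h1i ⊢
  exact le_antisymm h1i (h0 i)

def chainHeight (s : ℕ → ℤ) (k : ℕ) : ℤ := ∑ i ∈ range k, s i

lemma chainHeight_succ (s : ℕ → ℤ) (k : ℕ) : chainHeight s (k + 1) = chainHeight s k + s k :=
  sum_range_succ _ _

lemma chainHeight_congr {s s' : ℕ → ℤ} {t : ℕ} (h : ∀ k < t, s k = s' k) :
    chainHeight s t = chainHeight s' t :=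
  sum_congr rfl fun k hk => h k (mem_range.1 hk)

lemma chainHeight_add_sum_Ico (s : ℕ → ℤ) {j k : ℕ} (hjk : j ≤ k) :
    chainHeight s k = chainHeight s j + ∑ i ∈ Ico j k, s i :=
  (sum_range_add_sum_Ico s hjk).symm

lemma chainHeight_mono {s : ℕ → ℤ} {T k l : ℕ} (hs : ∀ i < T, 0 ≤ s i) (hkl : k ≤ l)
    (hl : l ≤ T) : chainHeight s k ≤ chainHeight s l := by
  rw [chainHeight_add_sum_Ico s hkl, le_add_iff_nonneg_right]
  exact sum_nonneg fun i hi => hs i (by grind)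

lemma chainHeight_nonneg {s : ℕ → ℤ} {T k : ℕ} (hs : ∀ i < T, 0 ≤ s i) (hk : k ≤ T) :
    0 ≤ chainHeight s k :=
  sum_nonneg fun i hi => hs i (by grind)

lemma natCast_le_chainHeight {s : ℕ → ℤ} {T : ℕ} (hs : ∀ i < T, 0 < s i) :
    (T : ℤ) ≤ chainHeight s T := by
  have := card_nsmul_le_sum (range T) s 1 fun i hi => by have := hs i (mem_range.1 hi); omega
  simpa [chainHeight] using this

lemma chainHeight_le_tangent {s : ℕ → ℤ} {T j k : ℕ} (hs : AntitoneOn s (Set.Iio T))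
    (hj : j < T) (hk : k ≤ T) : chainHeight s k ≤ chainHeight s j + s j * ((k : ℤ) - j) := by
  rcases le_total j k with hjk | hkj
  · have hsum : ∑ i ∈ Ico j k, s i ≤ #(Ico j k) • s j :=
      sum_le_card_nsmul _ _ _ fun i hi => hs hj (by grind) (mem_Ico.1 hi).1
    rw [chainHeight_add_sum_Ico s hjk]
    rw [Nat.card_Ico, nsmul_eq_mul, Nat.cast_sub hjk] at hsum
    linarith
  · have hsum : #(Ico k j) • s j ≤ ∑ i ∈ Ico k j, s i :=
      card_nsmul_le_sum _ _ _ fun i hi => hs (by grind) hj (mem_Ico.1 hi).2.le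
    rw [chainHeight_add_sum_Ico s hkj]
    rw [Nat.card_Ico, nsmul_eq_mul, Nat.cast_sub hkj] at hsum
    linarith

/-- The region below the lattice chain through `(k h, chainHeight s k * h)`, `k ≤ T`, in the plane
of the first two coordinates: a bounding box cut by the lines extending the chain's edges. -/
def chainPolytope (n T : ℕ) (h : ℝ) (s : ℕ → ℤ) : Set (Fin (n + 2) → ℝ) :=
  {y | 0 ≤ y ∧ y ≤ pt (T * h) (chainHeight s T * h) ∧
    ∀ k < T, y 1 ≤ chainHeight s k * h + s k * (y 0 - k * h)}

def chainVertex (h : ℝ) (s : ℕ → ℤ) (k : ℕ) : Fin (n + 2) → ℝ := pt (k * h) (chainHeight s k * h)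

variable {T : ℕ} {h : ℝ} {s : ℕ → ℤ}

lemma convex_chainPolytope : Convex ℝ (chainPolytope n T h s) := by
  rintro y ⟨hy0, hy1, hy⟩ z ⟨hz0, hz1, hz⟩ a b ha hb hab
  refine ⟨add_nonneg (smul_nonneg ha hy0) (smul_nonneg hb hz0), ?_, fun k hk => ?_⟩
  · exact (add_le_add (smul_le_smul_of_nonneg_left hy1 ha)
      (smul_le_smul_of_nonneg_left hz1 hb)).trans_eq (by rw [← add_smul, hab, one_smul])
  · obtain rfl : b = 1 - a := by linarith
    simp only [Pi.add_apply, Pi.smul_apply, smul_eq_mul]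
    nlinarith [mul_le_mul_of_nonneg_left (hy k hk) ha, mul_le_mul_of_nonneg_left (hz k hk) hb]

lemma pt_mem_chainPolytope (hh : 0 ≤ h) (hs : AntitoneOn s (Set.Iio T))
    (hs0 : ∀ i < T, 0 ≤ s i) {k : ℕ} (hk : k ≤ T) {w : ℝ} (hw0 : 0 ≤ w)
    (hw : w ≤ chainHeight s k * h) : pt (k * h) w ∈ chainPolytope n T h s := by
  have hgk : (chainHeight s k : ℝ) ≤ chainHeight s T := by
    exact_mod_cast chainHeight_mono hs0 hk le_rfl
  refine ⟨fun i => ?_, fun i => ?_, fun j hj => ?_⟩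
  · simp only [pt]; split_ifs <;> positivity
  · simp only [pt]; split_ifs
    · exact mul_le_mul_of_nonneg_right (by exact_mod_cast hk) hh
    · exact hw.trans (mul_le_mul_of_nonneg_right hgk hh)
    · rfl
  · have htan : (chainHeight s k : ℝ) ≤ chainHeight s j + s j * ((k : ℝ) - j) := by
      exact_mod_cast chainHeight_le_tangent hs hj hk
    simp only [pt_zero, pt_one]
    nlinarith [mul_le_mul_of_nonneg_right htan hh]

lemma eq_pt_of_mem_chainPolytope {y : Fin (n + 2) → ℝ} (hy : y ∈ chainPolytope n T h s) :
    y = pt (y 0) (y 1) :=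
  eq_pt_of_nonneg_of_le hy.1 hy.2.1

lemma apply_one_le_of_mem_chainPolytope {t : ℕ} (ht : t < T) (hst : 0 ≤ s t)
    {y : Fin (n + 2) → ℝ} (hy : y ∈ chainPolytope n T h s) (hu : y 0 ≤ (t + 1 : ℕ) * h) :
    y 1 ≤ chainHeight s (t + 1) * h := by
  have := hy.2.2 t ht
  push_cast [chainHeight_succ] at hu ⊢
  nlinarith [mul_le_mul_of_nonneg_left (sub_nonneg.2 hu) (by exact_mod_cast hst : (0 : ℝ) ≤ s t)]

lemma eq_vertex_of_mem_chainPolytope {t : ℕ} (ht : t < T) (hst : 0 < s t)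
    {y : Fin (n + 2) → ℝ} (hy : y ∈ chainPolytope n T h s) (hu : y 0 ≤ (t + 1 : ℕ) * h)
    (hw : y 1 = chainHeight s (t + 1) * h) :
    y = chainVertex h s (t + 1) := by
  have hline := hy.2.2 t ht
  have hst' : (0 : ℝ) < s t := by exact_mod_cast hst
  have hu' : y 0 = (t + 1 : ℕ) * h := by
    push_cast [chainHeight_succ] at hu hw ⊢
    nlinarith [mul_le_mul_of_nonneg_left (sub_nonneg.2 hu) hst'.le]
  rw [eq_pt_of_mem_chainPolytope hy, hu', hw, chainVertex]

def chainGrid (n T : ℕ) (h : ℝ) (s : ℕ → ℤ) : Set (Fin (n + 2) → ℝ) :=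
  {y | ∃ k ≤ T, y = pt (k * h) 0 ∨ y = chainVertex h s k}

lemma pt_mem_convexHull_chainGrid (hh : 0 < h) {k : ℕ} (hk : k < T) {u w : ℝ}
    (hku : k * h ≤ u) (huk : u ≤ (k + 1 : ℕ) * h) (hw0 : 0 ≤ w)
    (hw : w ≤ chainHeight s k * h + s k * (u - k * h)) :
    pt u w ∈ convexHull ℝ (chainGrid n T h s) := by
  have hC := convex_convexHull ℝ (chainGrid n T h s)
  have mem {j : ℕ} (hj : j ≤ T) (b : Bool) :
      pt (j * h) (if b then chainHeight s j * h else 0) ∈ convexHull ℝ (chainGrid n T h s) :=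
    subset_convexHull ℝ _ ⟨j, hj, by cases b <;> simp [chainVertex]⟩
  obtain ⟨l, hl0, hl1, rfl⟩ : ∃ l : ℝ, 0 ≤ l ∧ l ≤ 1 ∧ u = k * h + l * h :=
    ⟨(u - k * h) / h, div_nonneg (by linarith) hh.le,
      (div_le_one hh).2 (by push_cast at huk; linarith), by field_simp; ring⟩
  set F := chainHeight s k * h + s k * (k * h + l * h - k * h)
  -- `pt u w` lies on the vertical segment from the chord joining the feet of the vertices `k` and
  -- `k + 1` to the chord (an edge of the chain) joining the vertices themselves.
  have top : pt (k * h + l * h) F ∈ convexHull ℝ (chainGrid n T h s) := by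
    convert hC (mem hk.le true) (mem hk true) (sub_nonneg.2 hl1) hl0 (by ring) using 1
    rw [smul_pt_add_smul_pt, if_pos rfl, if_pos rfl, chainHeight_succ]
    push_cast
    congr 1 <;> ring
  have bot : pt (k * h + l * h) 0 ∈ convexHull ℝ (chainGrid n T h s) := by
    convert hC (mem hk.le false) (mem hk false) (sub_nonneg.2 hl1) hl0 (by ring) using 1
    simp only [smul_pt_add_smul_pt, Bool.false_eq_true, if_false, mul_zero, add_zero]
    push_cast
    congr 1; ring
  have hF : 0 ≤ F := hw0.trans hw
  convert hC top bot (div_nonneg hw0 hF) (sub_nonneg.2 (div_le_one_of_le₀ hw hF)) (by ring)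
    using 1
  rw [smul_pt_add_smul_pt, mul_zero, add_zero]
  congr 1
  · ring
  · rcases hF.eq_or_lt with hF0 | hF0
    · rw [← hF0, mul_zero]; linarith
    · exact (div_mul_cancel₀ _ hF0.ne').symm

lemma chainPolytope_subset_convexHull (hh : 0 < h) (hT : 0 < T) :
    chainPolytope n T h s ⊆ convexHull ℝ (chainGrid n T h s) := by
  intro y hy
  obtain ⟨hy0, hy1, hline⟩ := hy
  have hu0 : 0 ≤ y 0 := hy0 0
  have huT : y 0 ≤ T * h := by simpa using hy1 0
  obtain ⟨k, hk, hku, huk⟩ : ∃ k < T, k * h ≤ y 0 ∧ y 0 ≤ (k + 1 : ℕ) * h := by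
    by_cases hfl : ⌊y 0 / h⌋₊ < T
    · refine ⟨_, hfl, ?_, ?_⟩
      · exact (le_div_iff₀ hh).1 (Nat.floor_le (div_nonneg hu0 hh.le))
      · exact (div_le_iff₀ hh).1 (by exact_mod_cast (Nat.lt_floor_add_one _).le)
    · refine ⟨T - 1, by omega, ?_, by rwa [Nat.sub_add_cancel hT]⟩
      rw [← le_div_iff₀ hh]
      exact (Nat.cast_le.2 (by omega)).trans (Nat.floor_le (div_nonneg hu0 hh.le))
  rw [eq_pt_of_nonneg_of_le hy0 hy1]
  exact pt_mem_convexHull_chainGrid hh hk hku huk (hy0 1) (hline k hk)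

lemma extremePoints_chainPolytope_subset (hh : 0 < h) (hT : 0 < T)
    (hs : AntitoneOn s (Set.Iio T)) (hs0 : ∀ i < T, 0 ≤ s i) :
    (chainPolytope n T h s).extremePoints ℝ ⊆ chainGrid n T h s := by
  have hgrid : chainGrid n T h s ⊆ chainPolytope n T h s := by
    rintro y ⟨k, hk, rfl | rfl⟩
    · exact pt_mem_chainPolytope hh.le hs hs0 hk le_rfl
        (mul_nonneg (by exact_mod_cast chainHeight_nonneg hs0 hk) hh.le)
    · exact pt_mem_chainPolytope hh.le hs hs0 hk
        (mul_nonneg (by exact_mod_cast chainHeight_nonneg hs0 hk) hh.le) le_rfl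
  rw [(chainPolytope_subset_convexHull hh hT).antisymm
    (convexHull_min hgrid convex_chainPolytope)]
  exact extremePoints_convexHull_subset

lemma exists_matrix_eq_chainPolytope (n T : ℕ) (h : ℝ) (s : ℕ → ℤ) :
    ∃ (m : ℕ) (A : Matrix (Fin m) (Fin (n + 2)) ℝ) (b : Fin m → ℝ), 1 ≤ m ∧
      {y | ∀ j, A j ⬝ᵥ y ≤ b j} = chainPolytope n T h s := by
  let a : Fin (n + 2) ⊕ Fin (n + 2) ⊕ Fin T → Fin (n + 2) → ℝ :=
    Sum.elim (fun i => -Pi.single i 1) <| Sum.elim (fun i => Pi.single i 1)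
      fun k => Pi.single 1 1 - (s k : ℝ) • Pi.single 0 1
  let c : Fin (n + 2) ⊕ Fin (n + 2) ⊕ Fin T → ℝ :=
    Sum.elim 0 <| Sum.elim (pt (T * h) (chainHeight s T * h))
      fun k => chainHeight s k * h - s k * (k * h)
  obtain ⟨A, b, hAb⟩ := exists_matrix_eq_setOf_dotProduct_le a c
  refine ⟨_, A, b, by simp only [Fintype.card_sum, Fintype.card_fin]; omega,
    hAb.trans (Set.ext fun y => ?_)⟩
  simp only [Set.mem_ofPred_eq, Sum.forall, a, c, Sum.elim_inl, Sum.elim_inr, neg_dotProduct,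
    sub_dotProduct, smul_dotProduct, single_dotProduct, one_mul, smul_eq_mul, Pi.zero_apply,
    neg_nonpos, chainPolytope, Pi.le_def, Fin.forall_iff (n := T)]
  exact and_congr Iff.rfl <| and_congr Iff.rfl <| forall₂_congr fun k hk => by
    constructor <;> intro <;> linarith

lemma abs_le_one_of_mem_chainPolytope (hh : 0 ≤ h) (hpos : ∀ i < T, 0 < s i)
    (hg : chainHeight s T * h ≤ 1) {y : Fin (n + 2) → ℝ} (hy : y ∈ chainPolytope n T h s)
    (i : Fin (n + 2)) : |y i| ≤ 1 := by
  have hT : (T : ℝ) ≤ chainHeight s T := by exact_mod_cast natCast_le_chainHeight hpos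
  have : T * h ≤ 1 := (mul_le_mul_of_nonneg_right hT hh).trans hg
  rw [abs_of_nonneg (hy.1 i)]
  refine (hy.2.1 i).trans ?_
  simp only [pt]
  split_ifs <;> linarith

lemma isBounded_chainPolytope : Bornology.IsBounded (chainPolytope n T h s) :=
  (Metric.isBounded_Icc 0 (pt (T * h) (chainHeight s T * h))).subset fun _ hy => ⟨hy.1, hy.2.1⟩

lemma exists_int_mul_of_mem_chainGrid {y : Fin (n + 2) → ℝ} (hy : y ∈ chainGrid n T h s)
    (i : Fin (n + 2)) : ∃ z : ℤ, y i = z * h := by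
  obtain ⟨k, -, rfl | rfl⟩ := hy <;> simp only [pt, chainVertex] <;> split_ifs
  exacts [⟨k, by simp⟩, ⟨0, by simp⟩, ⟨0, by simp⟩, ⟨k, by simp⟩, ⟨_, rfl⟩, ⟨0, by simp⟩]

lemma chainVertex_unique_argmax (hh : 0 ≤ h) (hs : AntitoneOn s (Set.Iio T))
    (hpos : ∀ i < T, 0 < s i) {t : ℕ} (ht : t < T) :
    chainVertex h s (t + 1) ∈ chainPolytope n T h s ∧
      Pi.single 0 1 ⬝ᵥ chainVertex (n := n) h s (t + 1) ≤ (t + 1 : ℕ) * h ∧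
      (∀ y ∈ chainPolytope n T h s, Pi.single 0 1 ⬝ᵥ y ≤ (t + 1 : ℕ) * h →
        Pi.single 1 1 ⬝ᵥ y ≤ Pi.single 1 1 ⬝ᵥ chainVertex (n := n) h s (t + 1)) ∧
      (∀ y ∈ chainPolytope n T h s, Pi.single 0 1 ⬝ᵥ y ≤ (t + 1 : ℕ) * h →
        Pi.single 1 1 ⬝ᵥ y = Pi.single 1 1 ⬝ᵥ chainVertex (n := n) h s (t + 1) →
        y = chainVertex h s (t + 1)) := by
  have hs0 i (hi : i < T) := (hpos i hi).le
  simp only [single_dotProduct, one_mul, chainVertex, pt_zero, pt_one]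
  exact ⟨pt_mem_chainPolytope hh hs hs0 ht (mul_nonneg
      (by exact_mod_cast chainHeight_nonneg hs0 ht) hh) le_rfl, le_rfl,
    fun y hy hu => apply_one_le_of_mem_chainPolytope ht (hs0 t ht) hy hu,
    fun y hy hu hw => eq_vertex_of_mem_chainPolytope ht (hpos t ht) hy hu hw⟩

end Chain

section Adversary

def adversarySlope (T : ℕ) (β : ℕ → Bool) (k : ℕ) : ℤ := 2 ^ (T - k - 1 + (β k).toNat)

variable {T : ℕ} {β : ℕ → Bool}

lemma adversarySlope_pos (k : ℕ) : 0 < adversarySlope T β k := by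
  unfold adversarySlope; positivity

lemma antitoneOn_adversarySlope : AntitoneOn (adversarySlope T β) (Set.Iio T) := by
  intro i _ j (hj : j < T) hij
  rcases hij.eq_or_lt with rfl | hij
  · rfl
  · exact pow_le_pow_right₀ (by norm_num) (by cases β i <;> cases β j <;> simp <;> omega)

lemma adversarySlope_eq_iff {β' : ℕ → Bool} {k : ℕ} :
    adversarySlope T β k = adversarySlope T β' k ↔ β k = β' k := by
  rw [adversarySlope, adversarySlope, pow_right_inj₀ (by norm_num) (by norm_num)]
  cases β k <;> cases β' k <;> simp

lemma half_mul_two_pow_half_le {N : ℕ} (hN : 1 ≤ N) :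
    (N + 1) / 2 * 2 ^ ((N + 1) / 2) ≤ 2 ^ N := by
  have hT : (N + 1) / 2 ≤ 2 ^ ((N + 1) / 2 - 1) := by
    have := Nat.lt_two_pow_self (n := (N + 1) / 2 - 1); omega
  calc (N + 1) / 2 * 2 ^ ((N + 1) / 2) ≤ 2 ^ ((N + 1) / 2 - 1) * 2 ^ ((N + 1) / 2) :=
        Nat.mul_le_mul_right _ hT
    _ = 2 ^ ((N + 1) / 2 - 1 + (N + 1) / 2) := (pow_add _ _ _).symm
    _ ≤ 2 ^ N := Nat.pow_le_pow_right (by norm_num) (by omega)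

lemma chainHeight_adversarySlope_le_two_pow {N : ℕ} (hN : 1 ≤ N) :
    chainHeight (adversarySlope ((N + 1) / 2) β) ((N + 1) / 2) ≤ 2 ^ N := by
  have hsum := sum_le_card_nsmul (range ((N + 1) / 2)) (adversarySlope ((N + 1) / 2) β)
    (2 ^ ((N + 1) / 2)) fun k hk =>
      pow_le_pow_right₀ (by norm_num) (by cases β k <;> simp <;> grind)
  simp only [card_range, nsmul_eq_mul] at hsum
  exact hsum.trans (by exact_mod_cast half_mul_two_pow_half_le hN)

variable {n : ℕ}

def dayConstraint (h : ℝ) (t : ℕ) : (Fin (n + 2) → ℝ) × ℝ := (Pi.single 0 1, (t + 1 : ℕ) * h)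

theorem exists_adversary_forall_mistake (T : ℕ) {h : ℝ} (hh : h ≠ 0)
    (L : List (((Fin (n + 2) → ℝ) × ℝ) × (Fin (n + 2) → ℝ)) → (Fin (n + 2) → ℝ) × ℝ →
      Fin (n + 2) → ℝ) :
    ∃ β : ℕ → Bool, ∀ t < T,
      L ((List.ofFn fun k : Fin T =>
          (dayConstraint h k, chainVertex h (adversarySlope T β) (k + 1))).take t)
        (dayConstraint h t) ≠ chainVertex h (adversarySlope T β) (t + 1) := by
  have hout β β' t (hagree : ∀ k < t, β k = β' k) :
      chainVertex (n := n) h (adversarySlope T β) (t + 1) =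
        chainVertex h (adversarySlope T β') (t + 1) ↔ β t = β' t := by
    rw [chainVertex, chainVertex, pt_inj, chainHeight_succ, chainHeight_succ,
      chainHeight_congr (fun k hk => adversarySlope_eq_iff.2 (hagree k hk))]
    simp [hh, adversarySlope_eq_iff]
  obtain ⟨β, hβ⟩ := exists_forall_ne_of_causal
    (fun β t => chainVertex h (adversarySlope T β) (t + 1))
    (fun β t => L (List.ofFn fun k : Fin t =>
      (dayConstraint h k, chainVertex h (adversarySlope T β) (k + 1))) (dayConstraint h t))
    hout fun β β' t hagree => by
      simp only [fun k : Fin t => (hout β β' k fun j hj => hagree j (hj.trans k.2)).2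
        (hagree k k.2)]
  exact ⟨β, fun t ht => by rw [← Fin.ofFn_take_eq_take_ofFn ht.le]; exact hβ t⟩

end Adversary

open Classical in
/-- Theorem 3.9 (lower bound): for `d ≥ 3`, against any deterministic learner
in the Known Objective Problem there is a bounded polytope `P = {x | Ax ≤ b}`
inside the unit `ℓ∞`-ball, whose vertices have coordinates that are integer
multiples of `2^{-N}`, a known objective `c`, and a sequence of additional
constraints, such that each day's optimum is unique and the learner makes at
least `Ω(N)` mistakes. -/
theorem stmt_10 :
    ∃ γ : ℝ, 0 < γ ∧
      ∀ (d N : ℕ), 3 ≤ d → 1 ≤ N →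
      ∀ L : List (((Fin d → ℝ) × ℝ) × (Fin d → ℝ)) →
            ((Fin d → ℝ) × ℝ) → (Fin d → ℝ),
      ∃ (m : ℕ) (A : Matrix (Fin m) (Fin d) ℝ) (b : Fin m → ℝ)
        (c : Fin d → ℝ) (T : ℕ) (pc : Fin T → ((Fin d → ℝ) × ℝ))
        (x : Fin T → (Fin d → ℝ)),
        1 ≤ m ∧
        Bornology.IsBounded {y : Fin d → ℝ | ∀ j, A j ⬝ᵥ y ≤ b j} ∧
        (∀ y ∈ {y : Fin d → ℝ | ∀ j, A j ⬝ᵥ y ≤ b j}, ∀ i, |y i| ≤ 1) ∧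
        (∀ y ∈ Set.extremePoints ℝ {y : Fin d → ℝ | ∀ j, A j ⬝ᵥ y ≤ b j},
          ∀ i, ∃ z : ℤ, y i = (z : ℝ) / 2 ^ N) ∧
        (∀ t : Fin T,
          (∀ j, A j ⬝ᵥ x t ≤ b j) ∧ (pc t).1 ⬝ᵥ x t ≤ (pc t).2 ∧
          (∀ y, (∀ j, A j ⬝ᵥ y ≤ b j) → (pc t).1 ⬝ᵥ y ≤ (pc t).2 →
            c ⬝ᵥ y ≤ c ⬝ᵥ x t) ∧
          (∀ y, (∀ j, A j ⬝ᵥ y ≤ b j) → (pc t).1 ⬝ᵥ y ≤ (pc t).2 →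
            c ⬝ᵥ y = c ⬝ᵥ x t → y = x t)) ∧
        γ * N ≤
          ((Finset.univ.filter fun t : Fin T =>
            L ((List.ofFn fun s : Fin T => (pc s, x s)).take t) (pc t) ≠ x t).card : ℝ) := by
  refine ⟨1 / 2, by norm_num, fun d N hd hN L => ?_⟩
  obtain ⟨n, rfl⟩ : ∃ n, d = n + 2 := ⟨d - 2, by omega⟩
  set T := (N + 1) / 2
  set h : ℝ := (2 ^ N)⁻¹
  have hh : 0 < h := by positivity
  obtain ⟨β, hβ⟩ := exists_adversary_forall_mistake T hh.ne' L
  set s := adversarySlope T β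
  have hpos (i : ℕ) (_ : i < T) : 0 < s i := adversarySlope_pos i
  obtain ⟨m, A, b, hm, hAb⟩ := exists_matrix_eq_chainPolytope n T h s
  have hmem y : (∀ j, A j ⬝ᵥ y ≤ b j) ↔ y ∈ chainPolytope n T h s := Set.ext_iff.1 hAb y
  refine ⟨m, A, b, Pi.single 1 1, T, fun t => dayConstraint h t,
    fun t => chainVertex h s (t + 1), hm, ?_, ?_, ?_, fun t => ?_, ?_⟩ <;>
    simp only [hmem, Set.ofPred_mem_eq]
  · exact isBounded_chainPolytope
  · refine fun y hy => abs_le_one_of_mem_chainPolytope hh.le hpos ?_ hy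
    rw [mul_inv_le_iff₀ (by positivity), one_mul]
    exact_mod_cast chainHeight_adversarySlope_le_two_pow hN
  · intro y hy i
    obtain ⟨z, hz⟩ := exists_int_mul_of_mem_chainGrid (extremePoints_chainPolytope_subset hh
      (by omega) antitoneOn_adversarySlope (fun i hi => (hpos i hi).le) hy) i
    exact ⟨z, by rw [hz, div_eq_mul_inv]⟩
  · exact chainVertex_unique_argmax hh.le antitoneOn_adversarySlope hpos t.2
  · rw [filter_true_of_mem fun (t : Fin T) _ => hβ t t.2, card_univ, Fintype.card_fin]
    have : (N : ℝ) ≤ 2 * T := by exact_mod_cast (by omega : N ≤ 2 * T)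
    linarith
end
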